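/- Fix a real constant α and write a = sin α. Let G(f, v) be a smooth real-valued function of two real variables on an open set U ⊆ ℝ² satisfying the X₂-reduced equation (G + G_{vv} − 2a G_v) G_{ff} − (G_f)² − (G_{vf})² + 2a G_f G_{vf} = 4 on U, with G_f > 0 on U. Suppose the map (f, v) ↦ (ξ, v) := (ln G_f(f, v), v) is a diffeomorphism from U onto an open set U′ ⊆ ℝ² with smooth inverse (ξ, v) ↦ (f(ξ, v), v). Then f(ξ, v) satisfies the linear equation 4 e^{−2ξ} (f_{ξξ} − f_ξ) + f_{vv} + 2 sin α · f_{ξv} + f_{ξξ} = 0 on U′. -/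

import Mathlib

/-!
On `U'` the inverse map satisfies `G_f (f ξ v, v) = exp ξ`. Differentiating this identity once
expresses `f_ξ, f_v` through `G_ff, G_fv`; differentiating it twice expresses `f_ξξ, f_ξv, f_vv`
through these and the third derivatives `G_fff, G_ffv, G_fvv`. The `f`-derivative of the
X₂-reduced equation is one linear relation among the third derivatives, and the equation itself
fixes its coefficient `G + G_vv - 2 sin α G_v`. Substituting everything, the linear expression in
`f` vanishes; the only division is by `G_ff`, nonzero because `G_ff f_ξ = exp ξ`.
-/

noncomputable section

/-- Partial derivatives of a function of two real variables. -/
def p1 (H : ℝ → ℝ → ℝ) : ℝ → ℝ → ℝ := fun a b => deriv (fun s => H s b) a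
def p2 (H : ℝ → ℝ → ℝ) : ℝ → ℝ → ℝ := fun a b => deriv (fun s => H a s) b

open Function Real Filter Topology

theorem fderiv_fderiv_apply {E F : Type*} [NormedAddCommGroup E] [NormedSpace ℝ E]
    [NormedAddCommGroup F] [NormedSpace ℝ F] {g : E → F} {x : E}
    (hg : DifferentiableAt ℝ (fderiv ℝ g) x) (u w : E) :
    fderiv ℝ (fun y => fderiv ℝ g y u) x w = fderiv ℝ (fderiv ℝ g) x w u := by
  rw [fderiv_clm_apply hg (differentiableAt_const u)]
  simp

theorem ContDiffOn.differentiableAt_of_isOpen {E F : Type*} [NormedAddCommGroup E]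
    [NormedSpace ℝ E] [NormedAddCommGroup F] [NormedSpace ℝ F] {g : E → F} {s : Set E} {x : E}
    {n : WithTop ℕ∞} (hg : ContDiffOn ℝ n g s) (hs : IsOpen s) (hn : n ≠ 0) (hx : x ∈ s) :
    DifferentiableAt ℝ g x :=
  (hg.contDiffAt (hs.mem_nhds hx)).differentiableAt hn

namespace TwoVar

variable {H K : ℝ → ℝ → ℝ} {U : Set (ℝ × ℝ)} {a b : ℝ}

theorem hasDerivAt_comp_fderiv {x y : ℝ → ℝ} {x' y' t : ℝ}
    (hH : DifferentiableAt ℝ (uncurry H) (x t, y t)) (hx : HasDerivAt x x' t)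
    (hy : HasDerivAt y y' t) :
    HasDerivAt (fun s => H (x s) (y s)) (fderiv ℝ (uncurry H) (x t, y t) (x', y')) t :=
  (hH.hasFDerivAt.comp_hasDerivAt t (hx.prodMk hy) :)

theorem p1_eq_fderiv (hH : DifferentiableAt ℝ (uncurry H) (a, b)) :
    p1 H a b = fderiv ℝ (uncurry H) (a, b) (1, 0) :=
  (hasDerivAt_comp_fderiv hH (hasDerivAt_id a) (hasDerivAt_const a b)).deriv

theorem p2_eq_fderiv (hH : DifferentiableAt ℝ (uncurry H) (a, b)) :
    p2 H a b = fderiv ℝ (uncurry H) (a, b) (0, 1) :=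
  (hasDerivAt_comp_fderiv hH (hasDerivAt_const b a) (hasDerivAt_id b)).deriv

theorem hasDerivAt_comp₂ {x y : ℝ → ℝ} {x' y' t : ℝ}
    (hH : DifferentiableAt ℝ (uncurry H) (x t, y t)) (hx : HasDerivAt x x' t)
    (hy : HasDerivAt y y' t) :
    HasDerivAt (fun s => H (x s) (y s)) (p1 H (x t) (y t) * x' + p2 H (x t) (y t) * y') t := by
  convert hasDerivAt_comp_fderiv hH hx hy using 1
  have hxy : ((x', y') : ℝ × ℝ) = x' • (1, 0) + y' • (0, 1) := by simp
  rw [p1_eq_fderiv hH, p2_eq_fderiv hH, hxy, map_add, map_smul, map_smul, smul_eq_mul,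
    smul_eq_mul, mul_comm, mul_comm y']

theorem hasDerivAt_p1 (hH : DifferentiableAt ℝ (uncurry H) (a, b)) :
    HasDerivAt (fun s => H s b) (p1 H a b) a := by
  simpa using hasDerivAt_comp₂ hH (hasDerivAt_id a) (hasDerivAt_const a b)

theorem hasDerivAt_p2 (hH : DifferentiableAt ℝ (uncurry H) (a, b)) :
    HasDerivAt (fun s => H a s) (p2 H a b) b := by
  simpa using hasDerivAt_comp₂ hH (hasDerivAt_const b a) (hasDerivAt_id b)

theorem eventually_fst_mem (hU : IsOpen U) (hab : (a, b) ∈ U) :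
    ∀ᶠ s in 𝓝 a, (s, b) ∈ U :=
  (continuous_id.prodMk continuous_const).continuousAt.preimage_mem_nhds (hU.mem_nhds hab)

theorem eventually_snd_mem (hU : IsOpen U) (hab : (a, b) ∈ U) :
    ∀ᶠ s in 𝓝 b, (a, s) ∈ U :=
  (continuous_const.prodMk continuous_id).continuousAt.preimage_mem_nhds (hU.mem_nhds hab)

theorem p1_congr (hU : IsOpen U) (hHK : ∀ p ∈ U, H p.1 p.2 = K p.1 p.2) (hab : (a, b) ∈ U) :
    p1 H a b = p1 K a b :=
  Filter.EventuallyEq.deriv_eq <| (eventually_fst_mem hU hab).mono fun s hs => hHK (s, b) hs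

theorem p2_congr (hU : IsOpen U) (hHK : ∀ p ∈ U, H p.1 p.2 = K p.1 p.2) (hab : (a, b) ∈ U) :
    p2 H a b = p2 K a b :=
  Filter.EventuallyEq.deriv_eq <| (eventually_snd_mem hU hab).mono fun s hs => hHK (a, s) hs

theorem eq_of_hasDerivAt_fst {H K : ℝ × ℝ → ℝ} {x y : ℝ} (hU : IsOpen U)
    (hHK : ∀ p ∈ U, H p = K p) (hab : (a, b) ∈ U)
    (hH : HasDerivAt (fun s => H (s, b)) x a) (hK : HasDerivAt (fun s => K (s, b)) y a) : x = y :=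
  hH.unique <| hK.congr_of_eventuallyEq <|
    (eventually_fst_mem hU hab).mono fun s hs => hHK (s, b) hs

theorem eq_of_hasDerivAt_snd {H K : ℝ × ℝ → ℝ} {x y : ℝ} (hU : IsOpen U)
    (hHK : ∀ p ∈ U, H p = K p) (hab : (a, b) ∈ U)
    (hH : HasDerivAt (fun s => H (a, s)) x b) (hK : HasDerivAt (fun s => K (a, s)) y b) : x = y :=
  hH.unique <| hK.congr_of_eventuallyEq <|
    (eventually_snd_mem hU hab).mono fun s hs => hHK (a, s) hs

theorem contDiffOn_p1 {m n : WithTop ℕ∞} (hU : IsOpen U) (hH : ContDiffOn ℝ n (uncurry H) U)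
    (hmn : m + 1 ≤ n) : ContDiffOn ℝ m (uncurry (p1 H)) U := by
  refine ((hH.fderiv_of_isOpen hU hmn).clm_apply
    (contDiffOn_const (c := ((1 : ℝ), (0 : ℝ))))).congr fun p hp => p1_eq_fderiv ?_
  exact hH.differentiableAt_of_isOpen hU (ne_bot_of_le_ne_bot (by simp) hmn) hp

theorem contDiffOn_p2 {m n : WithTop ℕ∞} (hU : IsOpen U) (hH : ContDiffOn ℝ n (uncurry H) U)
    (hmn : m + 1 ≤ n) : ContDiffOn ℝ m (uncurry (p2 H)) U := by
  refine ((hH.fderiv_of_isOpen hU hmn).clm_apply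
    (contDiffOn_const (c := ((0 : ℝ), (1 : ℝ))))).congr fun p hp => p2_eq_fderiv ?_
  exact hH.differentiableAt_of_isOpen hU (ne_bot_of_le_ne_bot (by simp) hmn) hp

theorem p2_p1_eq_p1_p2 (hU : IsOpen U) (hH : ContDiffOn ℝ 2 (uncurry H) U) (hab : (a, b) ∈ U) :
    p2 (p1 H) a b = p1 (p2 H) a b := by
  have hD : ContDiffOn ℝ 1 (fderiv ℝ (uncurry H)) U := hH.fderiv_of_isOpen hU (by norm_num)
  have hDab := hD.differentiableAt_of_isOpen hU one_ne_zero hab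
  have hDu (u : ℝ × ℝ) : DifferentiableAt ℝ (fun q => fderiv ℝ (uncurry H) q u) (a, b) :=
    (hD.clm_apply contDiffOn_const).differentiableAt_of_isOpen hU one_ne_zero hab
  have hHd {p} (hp : p ∈ U) : DifferentiableAt ℝ (uncurry H) p :=
    hH.differentiableAt_of_isOpen hU two_ne_zero hp
  calc p2 (p1 H) a b
      = p2 (fun a b => fderiv ℝ (uncurry H) (a, b) (1, 0)) a b :=
        p2_congr hU (fun p hp => p1_eq_fderiv (hHd hp)) hab
    _ = fderiv ℝ (fderiv ℝ (uncurry H)) (a, b) (0, 1) (1, 0) := by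
        rw [p2_eq_fderiv (hDu _)]
        exact fderiv_fderiv_apply hDab _ _
    _ = fderiv ℝ (fderiv ℝ (uncurry H)) (a, b) (1, 0) (0, 1) :=
        ((hH.contDiffAt (hU.mem_nhds hab)).isSymmSndFDerivAt (by simp)).eq _ _
    _ = p1 (fun a b => fderiv ℝ (uncurry H) (a, b) (0, 1)) a b := by
        rw [p1_eq_fderiv (hDu _)]
        exact (fderiv_fderiv_apply hDab _ _).symm
    _ = p1 (p2 H) a b := (p1_congr hU (fun p hp => p2_eq_fderiv (hHd hp)) hab).symm

theorem mixed_partials_eq_of_contDiffOn_three (hU : IsOpen U) (hH : ContDiffOn ℝ 3 (uncurry H) U)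
    (hab : (a, b) ∈ U) :
    p2 (p1 H) a b = p1 (p2 H) a b ∧ p1 (p2 (p1 H)) a b = p1 (p1 (p2 H)) a b ∧
      p2 (p1 (p1 H)) a b = p1 (p1 (p2 H)) a b ∧ p2 (p2 (p1 H)) a b = p1 (p2 (p2 H)) a b := by
  have hsymm : ∀ p ∈ U, p2 (p1 H) p.1 p.2 = p1 (p2 H) p.1 p.2 :=
    fun p hp => p2_p1_eq_p1_p2 hU (hH.of_le (by norm_num)) hp
  have h121 : p1 (p2 (p1 H)) a b = p1 (p1 (p2 H)) a b := p1_congr hU hsymm hab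
  exact ⟨hsymm _ hab, h121,
    (p2_p1_eq_p1_p2 hU (contDiffOn_p1 hU hH (by norm_num)) hab).trans h121,
    (p2_congr hU hsymm hab).trans (p2_p1_eq_p1_p2 hU (contDiffOn_p2 hU hH (by norm_num)) hab)⟩

theorem hasDerivAt_subst_fst {f : ℝ → ℝ → ℝ}
    (hK : DifferentiableAt ℝ (uncurry K) (f a b, b))
    (hf : DifferentiableAt ℝ (uncurry f) (a, b)) :
    HasDerivAt (fun s => K (f s b) b) (p1 K (f a b) b * p1 f a b) a :=
  ((hasDerivAt_p1 hK).comp a (hasDerivAt_p1 hf) :)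

theorem hasDerivAt_subst_snd {f : ℝ → ℝ → ℝ}
    (hK : DifferentiableAt ℝ (uncurry K) (f a b, b))
    (hf : DifferentiableAt ℝ (uncurry f) (a, b)) :
    HasDerivAt (fun s => K (f a s) s) (p1 K (f a b) b * p2 f a b + p2 K (f a b) b) b := by
  simpa using hasDerivAt_comp₂ hK (hasDerivAt_p2 hf) (hasDerivAt_id b)

end TwoVar

open TwoVar

section Hodograph

variable {K f : ℝ → ℝ → ℝ} {U U' : Set (ℝ × ℝ)}

theorem hodograph_first_order (hU : IsOpen U) (hU' : IsOpen U')
    (hK : DifferentiableOn ℝ (uncurry K) U) (hf : DifferentiableOn ℝ (uncurry f) U')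
    (hmaps : ∀ p ∈ U', (f p.1 p.2, p.2) ∈ U) (hKf : ∀ p ∈ U', K (f p.1 p.2) p.2 = exp p.1)
    {ξ v : ℝ} (hp : (ξ, v) ∈ U') :
    p1 K (f ξ v) v * p1 f ξ v = exp ξ ∧
      p1 K (f ξ v) v * p2 f ξ v + p2 K (f ξ v) v = 0 := by
  have hKd := hK.differentiableAt (hU.mem_nhds (hmaps _ hp))
  have hfd := hf.differentiableAt (hU'.mem_nhds hp)
  exact ⟨eq_of_hasDerivAt_fst hU' hKf hp (hasDerivAt_subst_fst hKd hfd) (hasDerivAt_exp ξ),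
    eq_of_hasDerivAt_snd hU' hKf hp (hasDerivAt_subst_snd hKd hfd) (hasDerivAt_const v (exp ξ))⟩

theorem hodograph_second_order (hU : IsOpen U) (hU' : IsOpen U')
    (hK : ContDiffOn ℝ 2 (uncurry K) U) (hf : ContDiffOn ℝ 2 (uncurry f) U')
    (hmaps : ∀ p ∈ U', (f p.1 p.2, p.2) ∈ U) (hKf : ∀ p ∈ U', K (f p.1 p.2) p.2 = exp p.1)
    {ξ v : ℝ} (hp : (ξ, v) ∈ U') :
    p1 (p1 K) (f ξ v) v * p1 f ξ v * p1 f ξ v + p1 K (f ξ v) v * p1 (p1 f) ξ v = exp ξ ∧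
      p1 (p1 K) (f ξ v) v * p1 f ξ v * p2 f ξ v + p1 K (f ξ v) v * p1 (p2 f) ξ v
        + p1 (p2 K) (f ξ v) v * p1 f ξ v = 0 ∧
      (p1 (p1 K) (f ξ v) v * p2 f ξ v + p2 (p1 K) (f ξ v) v) * p2 f ξ v
        + p1 K (f ξ v) v * p2 (p2 f) ξ v
        + (p1 (p2 K) (f ξ v) v * p2 f ξ v + p2 (p2 K) (f ξ v) v) = 0 := by
  have hq := hmaps _ hp
  have hK1 := (contDiffOn_p1 hU hK le_rfl).differentiableAt_of_isOpen hU one_ne_zero hq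
  have hK2 := (contDiffOn_p2 hU hK le_rfl).differentiableAt_of_isOpen hU one_ne_zero hq
  have hfd := hf.differentiableAt_of_isOpen hU' two_ne_zero hp
  have hf1 := (contDiffOn_p1 hU' hf le_rfl).differentiableAt_of_isOpen hU' one_ne_zero hp
  have hf2 := (contDiffOn_p2 hU' hf le_rfl).differentiableAt_of_isOpen hU' one_ne_zero hp
  have hfirst (p) (hp : p ∈ U') := hodograph_first_order hU hU'
    (hK.differentiableOn two_ne_zero) (hf.differentiableOn two_ne_zero) hmaps hKf hp
  refine ⟨?_, ?_, ?_⟩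
  · exact eq_of_hasDerivAt_fst hU' (fun p hp => (hfirst p hp).1) hp
      ((hasDerivAt_subst_fst hK1 hfd).mul (hasDerivAt_p1 hf1)) (hasDerivAt_exp ξ)
  · exact eq_of_hasDerivAt_fst hU' (fun p hp => (hfirst p hp).2) hp
      (((hasDerivAt_subst_fst hK1 hfd).mul (hasDerivAt_p1 hf2)).add
        (hasDerivAt_subst_fst hK2 hfd)) (hasDerivAt_const ξ _)
  · exact eq_of_hasDerivAt_snd hU' (fun p hp => (hfirst p hp).2) hp
      (((hasDerivAt_subst_snd hK1 hfd).mul (hasDerivAt_p2 hf2)).add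
        (hasDerivAt_subst_snd hK2 hfd)) (hasDerivAt_const v _)

end Hodograph

theorem X2_equation_deriv_fst {G : ℝ → ℝ → ℝ} {U : Set (ℝ × ℝ)} (c : ℝ)
    (hU : IsOpen U) (hG : ContDiffOn ℝ 3 (uncurry G) U)
    (heq : ∀ f₀ v : ℝ, (f₀, v) ∈ U →
      (G f₀ v + p2 (p2 G) f₀ v - 2 * c * p2 G f₀ v) * p1 (p1 G) f₀ v
        - (p1 G f₀ v) ^ 2 - (p1 (p2 G) f₀ v) ^ 2 + 2 * c * p1 G f₀ v * p1 (p2 G) f₀ v = 4)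
    {f₀ v : ℝ} (hp : (f₀, v) ∈ U) :
    (p1 G f₀ v + p1 (p2 (p2 G)) f₀ v - 2 * c * p1 (p2 G) f₀ v) * p1 (p1 G) f₀ v
      + (G f₀ v + p2 (p2 G) f₀ v - 2 * c * p2 G f₀ v) * p1 (p1 (p1 G)) f₀ v
      - 2 * p1 G f₀ v * p1 (p1 G) f₀ v - 2 * p1 (p2 G) f₀ v * p1 (p1 (p2 G)) f₀ v
      + 2 * c * (p1 (p1 G) f₀ v * p1 (p2 G) f₀ v + p1 G f₀ v * p1 (p1 (p2 G)) f₀ v)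
      = 0 := by
  have hd {H : ℝ → ℝ → ℝ} (hH : ContDiffOn ℝ 1 (uncurry H) U) :
      HasDerivAt (fun s => H s v) (p1 H f₀ v) f₀ :=
    hasDerivAt_p1 (hH.differentiableAt_of_isOpen hU one_ne_zero hp)
  have hG1 := contDiffOn_p1 hU hG (m := 2) (by norm_num)
  have hG2 := contDiffOn_p2 hU hG (m := 2) (by norm_num)
  have dG := hd (hG.of_le (by norm_num))
  have dG1 := hd (hG1.of_le (by norm_num))
  have dG2 := hd (hG2.of_le (by norm_num))
  have dG11 := hd (contDiffOn_p1 hU hG1 (by norm_num))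
  have dG21 := hd (contDiffOn_p1 hU hG2 (by norm_num))
  have dG22 := hd (contDiffOn_p2 hU hG2 (by norm_num))
  have hderiv := (((((dG.add dG22).sub (dG2.const_mul (2 * c))).mul dG11).sub (dG1.pow 2)).sub
    (dG21.pow 2)).add ((dG1.const_mul (2 * c)).mul dG21)
  have := eq_of_hasDerivAt_fst hU (fun p hp => heq p.1 p.2 hp) hp hderiv
    (hasDerivAt_const f₀ (4 : ℝ))
  simp only [Pi.add_apply, Pi.sub_apply] at this
  linear_combination this

theorem linearised_of_jet_relations {a X g1 g11 g12 g111 g112 g122 d f1 f2 f11 f12 f22 : ℝ}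
    (hX : X * g1 ^ 2 = 1) (h1 : g11 * f1 = g1) (h2 : g11 * f2 + g12 = 0)
    (h11 : g111 * f1 * f1 + g11 * f11 = g1) (h12 : g111 * f1 * f2 + g11 * f12 + g112 * f1 = 0)
    (h22 : (g111 * f2 + g112) * f2 + g11 * f22 + (g112 * f2 + g122) = 0)
    (hpde : d * g11 - g1 ^ 2 - g12 ^ 2 + 2 * a * g1 * g12 = 4)
    (hpde' : (g1 + g122 - 2 * a * g12) * g11 + d * g111 - 2 * g1 * g11 - 2 * g12 * g112
      + 2 * a * (g11 * g12 + g1 * g112) = 0) :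
    4 * X * (f11 - f1) + f22 + 2 * a * f12 + f11 = 0 := by
  have hg1 : g1 ≠ 0 := by rintro rfl; simp at hX
  have hg11 : g11 ≠ 0 := by rintro rfl; exact hg1 (by linarith)
  -- `g1 ^ 2 * g11 ^ 3` clears the denominators of `f1, …, f22` solved from the relations.
  have key : (4 * X * (f11 - f1) + f22 + 2 * a * f12 + f11) * (g1 ^ 2 * g11 ^ 3) = 0 := by
    linear_combination (4 * g11 ^ 3 * (f11 - f1)) * hX
      + (-4 * g11 ^ 2 - 4 * g111 * (g11 * f1 + g1) - g1 ^ 2 * g111 * (g11 * f1 + g1)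
        + 2 * a * g1 ^ 2 * g12 * g111 - 2 * a * g1 ^ 2 * g11 * g112) * h1
      + (-g1 ^ 2 * g111 * (g11 * f2 - g12) - 2 * g1 ^ 2 * g11 * g112
        - 2 * a * g1 ^ 2 * g111 * (g11 * f1)) * h2
      + (4 * g11 ^ 2 + g1 ^ 2 * g11 ^ 2) * h11 + (2 * a * g1 ^ 2 * g11 ^ 2) * h12
      + (g1 ^ 2 * g11 ^ 2) * h22 + (g1 ^ 2 * g111) * hpde + (-g1 ^ 2 * g11) * hpde'
  exact (mul_eq_zero.mp key).resolve_right (by positivity)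

theorem X2_reduction_linearises_general (α : ℝ) (U U' : Set (ℝ × ℝ))
    (hU : IsOpen U) (hU' : IsOpen U')
    (G : ℝ → ℝ → ℝ)
    (hG : ContDiffOn ℝ (⊤ : ℕ∞) (fun p : ℝ × ℝ => G p.1 p.2) U)
    (hGf : ∀ p ∈ U, 0 < p1 G p.1 p.2)
    (heq : ∀ f₀ v : ℝ, (f₀, v) ∈ U →
      (G f₀ v + p2 (p2 G) f₀ v - 2 * Real.sin α * p2 G f₀ v) * p1 (p1 G) f₀ v
        - (p1 G f₀ v) ^ 2 - (p1 (p2 G) f₀ v) ^ 2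
        + 2 * Real.sin α * p1 G f₀ v * p1 (p2 G) f₀ v = 4)
    (f : ℝ → ℝ → ℝ)
    (hf : ContDiffOn ℝ (⊤ : ℕ∞) (fun p : ℝ × ℝ => f p.1 p.2) U')
    (hfrom : ∀ ξ v : ℝ, (ξ, v) ∈ U' →
      (f ξ v, v) ∈ U ∧ Real.log (p1 G (f ξ v) v) = ξ) :
    ∀ ξ v : ℝ, (ξ, v) ∈ U' →
      4 * Real.exp (-2 * ξ) * (p1 (p1 f) ξ v - p1 f ξ v)
        + p2 (p2 f) ξ v + 2 * Real.sin α * p1 (p2 f) ξ v + p1 (p1 f) ξ v = 0 := by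
  intro ξ v hp
  have hmaps : ∀ p ∈ U', (f p.1 p.2, p.2) ∈ U := fun p hp => (hfrom p.1 p.2 hp).1
  have hexp : ∀ p ∈ U', p1 G (f p.1 p.2) p.2 = exp p.1 := fun p hp =>
    (exp_log (hGf _ (hmaps p hp))).symm.trans (congrArg exp (hfrom p.1 p.2 hp).2)
  have hG3 : ContDiffOn ℝ 3 (uncurry G) U := hG.of_le ENat.LEInfty.out
  have hG1 := contDiffOn_p1 hU hG3 (m := 2) (by norm_num)
  have hq := hmaps _ hp
  obtain ⟨h1, h2⟩ := hodograph_first_order hU hU' (hG1.differentiableOn two_ne_zero)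
    (hf.differentiableOn (by simp)) hmaps hexp hp
  obtain ⟨h11, h12, h22⟩ :=
    hodograph_second_order hU hU' hG1 (hf.of_le ENat.LEInfty.out) hmaps hexp hp
  obtain ⟨s12, s121, s112, s122⟩ := mixed_partials_eq_of_contDiffOn_three hU hG3 hq
  rw [s12] at h2
  rw [s121] at h12
  rw [s112, s121, s122] at h22
  have hpde := heq _ _ hq
  have hpde' := X2_equation_deriv_fst (sin α) hU hG3 heq hq
  rw [hexp _ hp] at hpde hpde'
  refine linearised_of_jet_relations ?_ h1 h2 h11 h12 h22 hpde hpde'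
  rw [← exp_nat_mul, ← exp_add]
  norm_num

/-- If G(f, v) solves the X₂-reduced equation
(G + G_{vv} − 2a G_v) G_{ff} − G_f² − G_{vf}² + 2a G_f G_{vf} = 4 (a = sin α) with
G_f > 0, and (f, v) ↦ (ln G_f, v) is a diffeomorphism of U onto U′ with inverse
(ξ, v) ↦ (f(ξ, v), v), then f satisfies the linear equation
4 e^{−2ξ}(f_{ξξ} − f_ξ) + f_{vv} + 2 sin α f_{ξv} + f_{ξξ} = 0 on U′. -/
theorem X2_reduction_linearises (α : ℝ) (U U' : Set (ℝ × ℝ))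
    (hU : IsOpen U) (hU' : IsOpen U')
    (G : ℝ → ℝ → ℝ)
    (hG : ContDiffOn ℝ (⊤ : ℕ∞) (fun p : ℝ × ℝ => G p.1 p.2) U)
    (hGf : ∀ p ∈ U, 0 < p1 G p.1 p.2)
    (heq : ∀ f₀ v : ℝ, (f₀, v) ∈ U →
      (G f₀ v + p2 (p2 G) f₀ v - 2 * Real.sin α * p2 G f₀ v) * p1 (p1 G) f₀ v
        - (p1 G f₀ v) ^ 2 - (p1 (p2 G) f₀ v) ^ 2
        + 2 * Real.sin α * p1 G f₀ v * p1 (p2 G) f₀ v = 4)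
    (f : ℝ → ℝ → ℝ)
    (hf : ContDiffOn ℝ (⊤ : ℕ∞) (fun p : ℝ × ℝ => f p.1 p.2) U')
    (hto : ∀ f₀ v : ℝ, (f₀, v) ∈ U →
      (Real.log (p1 G f₀ v), v) ∈ U' ∧ f (Real.log (p1 G f₀ v)) v = f₀)
    (hfrom : ∀ ξ v : ℝ, (ξ, v) ∈ U' →
      (f ξ v, v) ∈ U ∧ Real.log (p1 G (f ξ v) v) = ξ) :
    ∀ ξ v : ℝ, (ξ, v) ∈ U' →
      4 * Real.exp (-2 * ξ) * (p1 (p1 f) ξ v - p1 f ξ v)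
        + p2 (p2 f) ξ v + 2 * Real.sin α * p1 (p2 f) ξ v + p1 (p1 f) ξ v = 0 :=
  X2_reduction_linearises_general α U U' hU hU' G hG hGf heq f hf hfrom

end
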